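/- Let A be an n×n pattern matrix none of whose diagonal entries is 0, let B be an n×m pattern matrix, and let Ā be obtained from A by keeping all off-diagonal entries and replacing each diagonal entry A_ii by ∗ if A_ii = 0 and by ? otherwise. Then the structured system (A,B) is strongly structurally controllable if and only if G([Ā B]) is colorable. -/

import Mathlib

/-- The symbols of a pattern matrix: fixed zero (`0`), arbitrary nonzero (`∗`),
and arbitrary (`?`). -/
inductive PSym : Type
  | zero
  | star
  | arb
  deriving DecidableEq

open Matrix

/-- The pattern class of a pattern matrix: real matrices that are `0` where the pattern
is `0`, nonzero where the pattern is `∗`, and unrestricted where the pattern is `?`. -/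
def PatternClass {R C : Type*} (M : Matrix R C PSym) : Set (Matrix R C ℝ) :=
  {A | ∀ i j, (M i j = PSym.zero → A i j = 0) ∧ (M i j = PSym.star → A i j ≠ 0)}

/-- A pattern matrix has full row rank if every member of its pattern class
has full row rank. -/
def PatternFullRowRank {R C : Type*} [Fintype R] [Fintype C] (M : Matrix R C PSym) : Prop :=
  ∀ A ∈ PatternClass M, A.rank = Fintype.card R

/-- Hautus test: `(A, B)` is controllable iff `[A - λI, B]` has rank `n` for all `λ ∈ ℂ`. -/
def Controllable {n m : ℕ} (A : Matrix (Fin n) (Fin n) ℝ) (B : Matrix (Fin n) (Fin m) ℝ) : Prop :=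
  ∀ l : ℂ, (Matrix.fromCols (A.map (Complex.ofReal) - l • (1 : Matrix (Fin n) (Fin n) ℂ))
      (B.map (Complex.ofReal))).rank = n

/-- Hautus test for stabilizability: `[A - λI, B]` has rank `n` for all `λ` with `Re λ ≥ 0`. -/
def Stabilizable {n m : ℕ} (A : Matrix (Fin n) (Fin n) ℝ) (B : Matrix (Fin n) (Fin m) ℝ) : Prop :=
  ∀ l : ℂ, 0 ≤ l.re →
    (Matrix.fromCols (A.map (Complex.ofReal) - l • (1 : Matrix (Fin n) (Fin n) ℂ))
      (B.map (Complex.ofReal))).rank = n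

/-- Strong structural controllability of the structured system `(𝒜, ℬ)`. -/
def StrStrControllable {n m : ℕ} (𝒜 : Matrix (Fin n) (Fin n) PSym)
    (ℬ : Matrix (Fin n) (Fin m) PSym) : Prop :=
  ∀ A ∈ PatternClass 𝒜, ∀ B ∈ PatternClass ℬ, Controllable A B

/-- Strong structural stabilizability of the structured system `(𝒜, ℬ)`. -/
def StrStrStabilizable {n m : ℕ} (𝒜 : Matrix (Fin n) (Fin n) PSym)
    (ℬ : Matrix (Fin n) (Fin m) PSym) : Prop :=
  ∀ A ∈ PatternClass 𝒜, ∀ B ∈ PatternClass ℬ, Stabilizable A B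

/-- The pattern matrix `Ā` obtained from `𝒜` by replacing each diagonal entry by `∗`
if it is `0` and by `?` otherwise, keeping all off-diagonal entries. -/
def barPattern {n : ℕ} (𝒜 : Matrix (Fin n) (Fin n) PSym) : Matrix (Fin n) (Fin n) PSym :=
  fun i j => if i = j then (if 𝒜 i i = PSym.zero then PSym.star else PSym.arb) else 𝒜 i j

/-- The sets of black nodes obtainable in `G(M)` by repeatedly applying the color change
rule, starting from the all-white coloring. The colorable nodes are the rows of `M`;
every node of `G(M)` corresponds to a column `c`, whose out-neighbors are the rows `k`
with `M k c ≠ 0`, and the edge from `c` to `k` is in `E_∗` iff `M k c = ∗`. A step colors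
`j` black when some node `c` has `j` as its only white out-neighbor and `(c, j) ∈ E_∗`. -/
inductive ColorStep {R C : Type*} (M : Matrix R C PSym) : Set R → Prop
  | init : ColorStep M ∅
  | step (S : Set R) (c : C) (j : R)
      (hS : ColorStep M S)
      (hstar : M j c = PSym.star)
      (hwhite : j ∉ S)
      (huniq : ∀ k : R, M k c ≠ PSym.zero → k ∉ S → k = j) :
      ColorStep M (insert j S)

/-- `G(M)` is colorable if all row-nodes can be colored black by repeated application
of the color change rule. -/
def PatternColorable {R C : Type*} (M : Matrix R C PSym) : Prop :=
  ColorStep M Set.univ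

/-!
If the colour change rule forces row `j` through column `c`, then in every matrix of the pattern
class the `c`-th entry of a left null vector `z` reduces to `z j * H j c` with `H j c ≠ 0`, so
`z j = 0`; a complete colouring thus kills every left null vector. Conversely a stalled colouring
`S` yields a real matrix of the pattern class annihilated by the indicator of `Sᶜ`: in each column
the white nonzero entries are chosen nonzero with zero sum, which is possible because stalling
means no `∗`-entry is the only white nonzero entry of its column.

For `𝒜` with nonzero diagonal, the matrices `[A - λI, B]` are exactly the members of the pattern
class of `[Ā ℬ]`, since the diagonal of `A - λI` can be shifted freely by `λ`; hence strong
structural controllability is pattern full row rank of `[Ā ℬ]`.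
-/

section PatternClass

variable {R C : Type*}

def PatternClassIn (K : Type*) [Zero K] (M : Matrix R C PSym) : Set (Matrix R C K) :=
  {H | ∀ i j, (M i j = PSym.zero → H i j = 0) ∧ (M i j = PSym.star → H i j ≠ 0)}

theorem patternClassIn_real (M : Matrix R C PSym) : PatternClassIn ℝ M = PatternClass M := rfl

theorem map_mem_patternClassIn {K L : Type*} [Zero K] [Zero L] {M : Matrix R C PSym}
    {H : Matrix R C K} (hH : H ∈ PatternClassIn K M) {f : K → L} (hf : Function.Injective f)
    (hf0 : f 0 = 0) : H.map f ∈ PatternClassIn L M := fun i j =>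
  ⟨fun h => by simp [(hH i j).1 h, hf0], fun h => by simpa [← hf0] using hf.ne ((hH i j).2 h)⟩

end PatternClass

theorem Matrix.rank_eq_card_iff_vecMul_injective {m n K : Type*} [Field K] [Fintype m]
    [Fintype n] (A : Matrix m n K) : A.rank = Fintype.card m ↔ Function.Injective A.vecMul := by
  rw [vecMul_injective_iff, linearIndependent_iff_card_eq_finrank_span,
    rank_eq_finrank_span_row, Set.finrank, eq_comm]

theorem Matrix.rank_eq_card_of_rank_map_eq_card {m n K L : Type*} [Field K] [Field L]
    [Fintype m] [Fintype n] (f : K →+* L) {A : Matrix m n K}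
    (h : (A.map f).rank = Fintype.card m) : A.rank = Fintype.card m := by
  rw [rank_eq_card_iff_vecMul_injective] at h ⊢
  intro z z' (hzz' : z ᵥ* A = z' ᵥ* A)
  have hmap : (f ∘ z) ᵥ* A.map f = (f ∘ z') ᵥ* A.map f := funext fun j => by
    rw [← RingHom.map_vecMul, ← RingHom.map_vecMul, hzz']
  exact funext fun i => f.injective (congrFun (h hmap) i)

theorem ColorStep.eq_zero_of_vecMul_eq_zero {R C K : Type*} [Fintype R] [Semiring K]
    [NoZeroDivisors K] {M : Matrix R C PSym} {H : Matrix R C K} (hH : H ∈ PatternClassIn K M)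
    {z : R → K} (hz : z ᵥ* H = 0) {S : Set R} (hS : ColorStep M S) : ∀ i ∈ S, z i = 0 := by
  induction hS with
  | init => simp
  | step S c j _ hstar _ huniq ih =>
    rintro i (rfl | hi)
    · have hcol : z i * H i c = 0 := by
        refine .trans (Finset.sum_eq_single (f := fun k => z k * H k c) i (fun k _ hki => ?_)
          (absurd (Finset.mem_univ i))).symm (congrFun hz c)
        by_cases hk0 : M k c = PSym.zero
        · rw [(hH k c).1 hk0, mul_zero]
        · rw [ih k (not_not.1 (mt (huniq k hk0) hki)), zero_mul]
      exact (mul_eq_zero.1 hcol).resolve_right ((hH i c).2 hstar)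
    · exact ih i hi

theorem PatternColorable.rank_eq_card {R C K : Type*} [Fintype R] [Fintype C] [Field K]
    {M : Matrix R C PSym} (hM : PatternColorable M) {H : Matrix R C K}
    (hH : H ∈ PatternClassIn K M) : H.rank = Fintype.card R := by
  rw [rank_eq_card_iff_vecMul_injective, ← coe_vecMulLinear, injective_iff_map_eq_zero]
  exact fun z hz => funext fun i => hM.eq_zero_of_vecMul_eq_zero hH hz i (Set.mem_univ i)

theorem Finset.exists_sum_eq_zero_and_ne_zero {ι K : Type*} [Ring K] [CharZero K]
    (s : Finset ι) : ∃ f : ι → K, ∑ i ∈ s, f i = 0 ∧ ∀ i ∈ s, s ≠ {i} → f i ≠ 0 := by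
  classical
  rcases s.eq_empty_or_nonempty with rfl | ⟨a, ha⟩
  · exact ⟨0, by simp, by simp⟩
  refine ⟨fun i => 1 - if i = a then (s.card : K) else 0, ?_, fun i hi hsi => ?_⟩
  · simp [Finset.sum_sub_distrib, ha]
  · by_cases hia : i = a
    · subst hia
      have hcard : s.card ≠ 1 := fun h =>
        hsi (by obtain ⟨b, rfl⟩ := Finset.card_eq_one.1 h; rw [Finset.mem_singleton.1 hi])
      simpa [sub_eq_zero, eq_comm (a := (1 : K))] using hcard
    · simp [hia]

section Stalled

variable {R C : Type*}

def Stalled (M : Matrix R C PSym) (S : Set R) : Prop :=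
  ∀ c j, M j c = PSym.star → j ∉ S → ∃ k, M k c ≠ PSym.zero ∧ k ∉ S ∧ k ≠ j

theorem exists_colorStep_stalled [Finite R] (M : Matrix R C PSym) :
    ∃ S, ColorStep M S ∧ Stalled M S := by
  obtain ⟨S, hS, hmax⟩ := (Set.toFinite {S | ColorStep M S}).exists_maximal ⟨∅, .init⟩
  refine ⟨S, hS, fun c j hstar hj => ?_⟩
  by_contra! huniq
  exact hj (hmax (ColorStep.step S c j hS hstar hj huniq) (Set.subset_insert j S)
    (Set.mem_insert j S))

theorem Stalled.exists_mem_patternClassIn_vecMul_eq_zero {K : Type*} [Fintype R] [Ring K]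
    [CharZero K] {M : Matrix R C PSym} {S : Set R} (hS : Stalled M S) :
    ∃ H ∈ PatternClassIn K M, Sᶜ.indicator 1 ᵥ* H = 0 := by
  classical
  let W : C → Finset R := fun c => {k | k ∉ S ∧ M k c ≠ PSym.zero}
  choose f hf_sum hf_ne using fun c => (W c).exists_sum_eq_zero_and_ne_zero (K := K)
  refine ⟨fun k c => if k ∈ W c then f c k else if M k c = PSym.star then 1 else 0,
    fun k c => ⟨fun h0 => by simp [W, h0], fun hstar => ?_⟩, funext fun c => ?_⟩
  · dsimp only
    split_ifs with hk
    · refine hf_ne c k hk fun hsing => ?_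
      obtain ⟨j, hj0, hjS, hjk⟩ := hS c k hstar (Finset.mem_filter.1 hk).2.1
      exact hjk (Finset.mem_singleton.1 (hsing ▸ by simp [W, hj0, hjS]))
    · exact one_ne_zero
  · calc ∑ k, Sᶜ.indicator 1 k * _ = ∑ k, if k ∈ W c then f c k else 0 := by
          refine Finset.sum_congr rfl fun k _ => ?_
          by_cases hkS : k ∈ S <;> by_cases hk0 : M k c = PSym.zero <;> simp [W, hkS, hk0]
      _ = 0 := by rw [Finset.sum_ite_mem, Finset.univ_inter, hf_sum]

theorem exists_mem_patternClassIn_vecMul_eq_zero_of_not_colorable {K : Type*} [Fintype R]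
    [Ring K] [CharZero K] {M : Matrix R C PSym} (hM : ¬ PatternColorable M) :
    ∃ H ∈ PatternClassIn K M, ∃ z ≠ 0, z ᵥ* H = 0 := by
  obtain ⟨S, hS, hstall⟩ := exists_colorStep_stalled M
  obtain ⟨H, hH, hz⟩ := hstall.exists_mem_patternClassIn_vecMul_eq_zero (K := K)
  obtain ⟨j, hj⟩ := Set.ne_univ_iff_exists_notMem S |>.1 fun h =>
    hM (by rw [PatternColorable, ← h]; exact hS)
  exact ⟨H, hH, _, fun h => by simpa [hj] using congrFun h j, hz⟩

end Stalled

theorem patternFullRowRank_iff_patternColorable {R C : Type*} [Fintype R] [Fintype C]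
    (M : Matrix R C PSym) : PatternFullRowRank M ↔ PatternColorable M := by
  refine ⟨fun hM => by_contra fun hcol => ?_, fun hM H hH => hM.rank_eq_card hH⟩
  obtain ⟨H, hH, z, hz, hzH⟩ :=
    exists_mem_patternClassIn_vecMul_eq_zero_of_not_colorable (K := ℝ) hcol
  rw [patternClassIn_real] at hH
  have hinj := (rank_eq_card_iff_vecMul_injective H).1 (hM H hH)
  exact hz (hinj (hzH.trans (zero_vecMul H).symm))

theorem fromCols_mem_patternClassIn_iff {R C₁ C₂ K : Type*} [Zero K]
    {P : Matrix R C₁ PSym} {Q : Matrix R C₂ PSym} {X : Matrix R C₁ K} {Y : Matrix R C₂ K} :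
    fromCols X Y ∈ PatternClassIn K (fromCols P Q) ↔
      X ∈ PatternClassIn K P ∧ Y ∈ PatternClassIn K Q :=
  ⟨fun h => ⟨fun i j => h i (.inl j), fun i j => h i (.inr j)⟩,
    fun ⟨hX, hY⟩ i => Sum.rec (hX i) (hY i)⟩

section BarPattern

variable {n : ℕ} {K : Type*} [Ring K] {𝒜 : Matrix (Fin n) (Fin n) PSym}

theorem sub_smul_one_mem_patternClassIn_barPattern (hdiag : ∀ i, 𝒜 i i ≠ PSym.zero)
    {X : Matrix (Fin n) (Fin n) K} (hX : X ∈ PatternClassIn K 𝒜) (l : K) :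
    X - l • 1 ∈ PatternClassIn K (barPattern 𝒜) := by
  intro i j
  by_cases hij : i = j
  · subst hij
    simp [barPattern, hdiag]
  · simpa [barPattern, hij, one_apply_ne hij] using hX i j

theorem exists_add_smul_one_mem_patternClassIn [Infinite K] (hdiag : ∀ i, 𝒜 i i ≠ PSym.zero)
    {Y : Matrix (Fin n) (Fin n) K} (hY : Y ∈ PatternClassIn K (barPattern 𝒜)) :
    ∃ l : K, Y + l • 1 ∈ PatternClassIn K 𝒜 := by
  classical
  obtain ⟨l, hl⟩ := Infinite.exists_notMem_finset (Finset.univ.image fun i => -Y i i)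
  refine ⟨l, fun i j => ?_⟩
  by_cases hij : i = j
  · subst hij
    refine ⟨fun h0 => absurd h0 (hdiag i), fun _ => ?_⟩
    simp only [Matrix.add_apply, Matrix.smul_apply, one_apply_eq, smul_eq_mul, mul_one]
    exact fun h => hl (Finset.mem_image.2 ⟨i, Finset.mem_univ i, neg_eq_of_add_eq_zero_right h⟩)
  · simpa [barPattern, hij, one_apply_ne hij] using hY i j

end BarPattern

section Hautus

variable {n m : ℕ}

def hautusMatrix (A : Matrix (Fin n) (Fin n) ℝ) (B : Matrix (Fin n) (Fin m) ℝ) (l : ℂ) :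
    Matrix (Fin n) (Fin n ⊕ Fin m) ℂ :=
  fromCols (A.map Complex.ofReal - l • 1) (B.map Complex.ofReal)

theorem hautusMatrix_add_smul_one (N₁ : Matrix (Fin n) (Fin n) ℝ)
    (N₂ : Matrix (Fin n) (Fin m) ℝ) (l : ℝ) :
    hautusMatrix (N₁ + l • 1) N₂ l = (fromCols N₁ N₂).map Complex.ofReal := by
  rw [hautusMatrix, fromCols_map]
  congr 1
  ext i j
  by_cases hij : i = j <;> simp [hij]

theorem hautusMatrix_mem_patternClassIn {𝒜 : Matrix (Fin n) (Fin n) PSym}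
    {ℬ : Matrix (Fin n) (Fin m) PSym} (hdiag : ∀ i, 𝒜 i i ≠ PSym.zero)
    {A : Matrix (Fin n) (Fin n) ℝ} (hA : A ∈ PatternClass 𝒜) {B : Matrix (Fin n) (Fin m) ℝ}
    (hB : B ∈ PatternClass ℬ) (l : ℂ) :
    hautusMatrix A B l ∈ PatternClassIn ℂ (fromCols (barPattern 𝒜) ℬ) :=
  fromCols_mem_patternClassIn_iff.2
    ⟨sub_smul_one_mem_patternClassIn_barPattern hdiag
      (map_mem_patternClassIn hA Complex.ofReal_injective Complex.ofReal_zero) l,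
    map_mem_patternClassIn hB Complex.ofReal_injective Complex.ofReal_zero⟩

end Hautus

/-- **Corollary (graph-theoretic condition, nonzero diagonal).** If no diagonal entry of
`𝒜` is `0`, then `(𝒜, ℬ)` is strongly structurally controllable iff `G([𝒜bar ℬ])` is
colorable. -/
theorem ssc_iff_colorable_of_diag_ne_zero {n m : ℕ} (𝒜 : Matrix (Fin n) (Fin n) PSym)
    (ℬ : Matrix (Fin n) (Fin m) PSym) (hdiag : ∀ i, 𝒜 i i ≠ PSym.zero) :
    StrStrControllable 𝒜 ℬ ↔
      PatternColorable (Matrix.fromCols (barPattern 𝒜) ℬ) := by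
  constructor
  · intro hssc
    refine (patternFullRowRank_iff_patternColorable _).1 fun H hH => ?_
    rw [← fromCols_toCols H, ← patternClassIn_real, fromCols_mem_patternClassIn_iff] at hH
    obtain ⟨l, hl⟩ := exists_add_smul_one_mem_patternClassIn hdiag hH.1
    have hrank : (hautusMatrix (H.toCols₁ + l • 1) H.toCols₂ l).rank = n :=
      hssc _ hl _ hH.2 l
    rw [hautusMatrix_add_smul_one, fromCols_toCols] at hrank
    simpa using rank_eq_card_of_rank_map_eq_card Complex.ofRealHom
      (hrank.trans (Fintype.card_fin n).symm)
  · intro hcol A hA B hB l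
    exact (hcol.rank_eq_card (hautusMatrix_mem_patternClassIn hdiag hA hB l)).trans
      (Fintype.card_fin n)
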